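/- arXiv:2512.07883 — 2 statements merged into one kernel-verified Lean document; each statement's English description precedes it below -/
import Mathlib

section
/- Let φ ∈ C²([0,∞)) be a nonnegative convex function with φ(0)=0, φ'(0)=1, and φ' concave. Then for all u, v ≥ 0 one has u·φ'(v) ≤ φ(u) + φ(v). -/
/-!
By the tangent line inequality of the convex function φ at v,
`u φ'(v) ≤ φ(u) - φ(v) + v φ'(v)`, so it suffices that `v φ'(v) ≤ 2 φ(v)`.
Concavity of φ' with `φ'(0) ≥ 0` gives `φ'(t) ≥ (t / v) φ'(v)` on `[0, v]`, and integrating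
this bound from `0` to `v` yields `φ(v) ≥ v φ'(v) / 2`.
-/

open Set

theorem ConvexOn.deriv_mul_sub_le {S : Set ℝ} {f : ℝ → ℝ} {x y : ℝ} (hf : ConvexOn ℝ S f)
    (hx : x ∈ S) (hy : y ∈ S) (hfd : DifferentiableAt ℝ f x) :
    deriv f x * (y - x) ≤ f y - f x := by
  rcases lt_trichotomy x y with hxy | rfl | hxy
  · have h := hf.deriv_le_slope hx hy hxy hfd
    rw [slope_def_field, le_div_iff₀ (sub_pos.2 hxy)] at h
    exact h
  · simp
  · have h := hf.slope_le_deriv hy hx hxy hfd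
    rw [slope_def_field, div_le_iff₀ (sub_pos.2 hxy)] at h
    linarith

theorem ConcaveOn.mul_le_map_mul {f : ℝ → ℝ} {a x : ℝ} (hf : ConcaveOn ℝ (Ici 0) f)
    (hf0 : 0 ≤ f 0) (ha₀ : 0 ≤ a) (ha₁ : a ≤ 1) (hx : 0 ≤ x) : a * f x ≤ f (a * x) := by
  have h := hf.2 self_mem_Ici (mem_Ici.2 hx) (sub_nonneg.2 ha₁) ha₀ (sub_add_cancel 1 a)
  simp only [smul_eq_mul, mul_zero, zero_add] at h
  nlinarith

theorem mul_sq_sub_sq_div_two_le_sub_of_mul_le_deriv {f : ℝ → ℝ} {a b c : ℝ} (hab : a ≤ b)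
    (hf : ContinuousOn f (Icc a b)) (hfd : DifferentiableOn ℝ f (Ioo a b))
    (hc : ∀ t ∈ Ioo a b, c * t ≤ deriv f t) : c * (b ^ 2 - a ^ 2) / 2 ≤ f b - f a := by
  have hmono : MonotoneOn (fun t => f t - c * t ^ 2 / 2) (Icc a b) := by
    refine monotoneOn_of_deriv_nonneg (convex_Icc a b) (by fun_prop) ?_ ?_ <;>
      rw [interior_Icc]
    · exact hfd.sub (by fun_prop)
    · intro t ht
      have hft := (hfd t ht).differentiableAt (Ioo_mem_nhds ht.1 ht.2)
      rw [deriv_fun_sub hft (by fun_prop)]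
      simp only [deriv_div_const, deriv_const_mul_field', deriv_pow_field]
      linarith [hc t ht]
  have := hmono (left_mem_Icc.2 hab) (right_mem_Icc.2 hab) hab
  simp only at this
  linarith

theorem mul_deriv_le_two_mul {φ : ℝ → ℝ} {v : ℝ}
    (hφd : ∀ x, 0 ≤ x → DifferentiableAt ℝ φ x) (hφ0 : φ 0 = 0) (hφ'0 : 0 ≤ deriv φ 0)
    (hconc : ConcaveOn ℝ (Ici 0) (deriv φ)) (hv : 0 ≤ v) : v * deriv φ v ≤ 2 * φ v := by
  rcases hv.eq_or_lt with rfl | hv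
  · simp [hφ0]
  have hφ'_lower : ∀ t ∈ Ioo 0 v, deriv φ v / v * t ≤ deriv φ t := by
    intro t ht
    have h := hconc.mul_le_map_mul hφ'0 (div_nonneg ht.1.le hv.le)
      ((div_le_one hv).2 ht.2.le) hv.le
    rwa [div_mul_cancel₀ t hv.ne', div_mul_comm] at h
  have h := mul_sq_sub_sq_div_two_le_sub_of_mul_le_deriv hv.le
    (fun x hx => (hφd x hx.1).continuousAt.continuousWithinAt)
    (fun x hx => (hφd x hx.1.le).differentiableWithinAt) hφ'_lower
  have harea : deriv φ v / v * (v ^ 2 - 0 ^ 2) / 2 = v * deriv φ v / 2 := by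
    field_simp; ring
  linarith

theorem stmt0_general (φ : ℝ → ℝ)
    (hC2 : ContDiffOn ℝ 2 φ (Set.Ici 0))
    (hconv : ConvexOn ℝ (Set.Ici 0) φ)
    (h0 : φ 0 = 0) (h0' : deriv φ 0 = 1)
    (hconc : ConcaveOn ℝ (Set.Ici 0) (deriv φ)) :
    ∀ u v : ℝ, 0 ≤ u → 0 ≤ v → u * deriv φ v ≤ φ u + φ v := by
  have hφd : ∀ x, 0 ≤ x → DifferentiableAt ℝ φ x := by
    intro x hx
    rcases hx.eq_or_lt with rfl | hx
    · exact differentiableAt_of_deriv_ne_zero (by simp [h0'])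
    · exact (hC2.differentiableOn two_ne_zero x hx.le).differentiableAt (Ici_mem_nhds hx)
  intro u v hu hv
  have htangent := hconv.deriv_mul_sub_le (mem_Ici.2 hv) (mem_Ici.2 hu) (hφd v hv)
  have hdouble := mul_deriv_le_two_mul hφd h0 (by simp [h0']) hconc hv
  linarith

theorem stmt0 (φ : ℝ → ℝ)
    (hC2 : ContDiffOn ℝ 2 φ (Set.Ici 0))
    (hnn : ∀ x ≥ (0:ℝ), 0 ≤ φ x)
    (hconv : ConvexOn ℝ (Set.Ici 0) φ)
    (h0 : φ 0 = 0) (h0' : deriv φ 0 = 1)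
    (hconc : ConcaveOn ℝ (Set.Ici 0) (deriv φ)) :
    ∀ u v : ℝ, 0 ≤ u → 0 ≤ v → u * deriv φ v ≤ φ u + φ v :=
  stmt0_general φ hC2 hconv h0 h0' hconc
end

section
/- Let c^N be the nonnegative mass-conserving solution of the truncated discrete CA system with Σ_{i=1}^N i c_i^{in,N} ≤ M₁ < ∞. Suppose μ_i := sup_j K_{i,j}/j < ∞ and ξ_i := sup_j C_{i,j} < ∞ for each i. Then for every i and all t ≥ 0, |dc_i^N(t)/dt| ≤ (μ_{i−1} + ξ_{i−1} + 2(μ_i + ξ_i)) · M₁², a bound independent of N and t. -/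
/-- The truncated discrete condensing-aggregation reaction term `Q_i^N(c)`
(with the convention `c 0 = 0` imposed as a hypothesis). -/
def Qtr (K C : ℕ → ℕ → ℝ) (N : ℕ) (c : ℕ → ℝ) (i : ℕ) : ℝ :=
    c (i-1) * (∑ j ∈ Finset.Icc 1 (i-1), (j:ℝ) * K (i-1) j * c j)
  - c i * (∑ j ∈ Finset.Icc 1 i, (j:ℝ) * K i j * c j)
  - c i * (∑ j ∈ Finset.Icc i N, K i j * c j)
  + c (i-1) * (∑ j ∈ Finset.Icc (i-1) N, (j:ℝ) * C (i-1) j * c j)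
  - c i * (∑ j ∈ Finset.Icc i N, (j:ℝ) * C i j * c j)
  - c i * (∑ j ∈ Finset.Icc 1 i, C i j * c j)

/-! Each of the six terms of `Qtr K C N c i` is a product `c k * S` of nonnegative factors.
The kernel bounds `K k j ≤ μ k * j` and `C k j ≤ ξ k` dominate every sum `S` termwise by a multiple
of the first moment `∑ j * c j ≤ M₁`, and the prefactor is controlled by `c k ≤ M₁`, or by
`k * c k ≤ M₁` when the sum runs over `j ≤ k` and carries the weight `j * K k j ≤ μ k * k * j`.
So the two gain terms are at most `(μ (i-1) + ξ (i-1)) * M₁^2` and the four loss terms at most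
`2 * (μ i + ξ i) * M₁^2`. -/

open Finset

theorem mul_mem_Icc_mul_sq_of_le {u S m M : ℝ} (hu : 0 ≤ u) (huM : u ≤ M) (hS : 0 ≤ S)
    (hSM : S ≤ m * M) : u * S ∈ Set.Icc 0 (m * M ^ 2) :=
  ⟨mul_nonneg hu hS, by nlinarith [mul_le_mul huM hSM hS (hu.trans huM)]⟩

namespace TruncatedCA

variable {N k : ℕ} {M m : ℝ} {x a : ℕ → ℝ}

theorem nonneg_of_moment_le (hx : ∀ j, 0 ≤ x j) (hM : ∑ j ∈ Icc 1 N, (j : ℝ) * x j ≤ M) : 0 ≤ M :=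
  (sum_nonneg fun j _ => mul_nonneg j.cast_nonneg (hx j)).trans hM

theorem sum_le_mul_of_le_mul_moment (hx : ∀ j, 0 ≤ x j) (hM : ∑ j ∈ Icc 1 N, (j : ℝ) * x j ≤ M)
    {s : Finset ℕ} (hs : s ⊆ Icc 0 N) {g : ℕ → ℝ} {A : ℝ}
    (hA : 0 ≤ A) (hg : ∀ j ∈ s, g j ≤ A * (j * x j)) : ∑ j ∈ s, g j ≤ A * M := by
  have hmoment : ∑ j ∈ Icc 0 N, (j : ℝ) * x j ≤ M := by
    rwa [← add_sum_Ioc_eq_sum_Icc N.zero_le, ← Icc_add_one_left_eq_Ioc, Nat.cast_zero, zero_mul,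
      zero_add]
  calc ∑ j ∈ s, g j ≤ ∑ j ∈ s, A * (j * x j) := sum_le_sum hg
    _ = A * ∑ j ∈ s, (j : ℝ) * x j := (mul_sum _ _ _).symm
    _ ≤ A * ∑ j ∈ Icc 0 N, (j : ℝ) * x j := by
      refine mul_le_mul_of_nonneg_left ?_ hA
      exact sum_le_sum_of_subset_of_nonneg hs fun j _ _ => mul_nonneg j.cast_nonneg (hx j)
    _ ≤ A * M := by gcongr

theorem natCast_mul_le_of_moment_le (hx : ∀ j, 0 ≤ x j) (hM : ∑ j ∈ Icc 1 N, (j : ℝ) * x j ≤ M)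
    (hk : k ≤ N) : (k : ℝ) * x k ≤ M := by
  simpa using sum_le_mul_of_le_mul_moment hx hM (s := {k}) (by simpa using hk) zero_le_one
    (g := fun j => (j : ℝ) * x j) (by simp)

theorem le_of_moment_le_of_one_le (hx : ∀ j, 0 ≤ x j) (hM : ∑ j ∈ Icc 1 N, (j : ℝ) * x j ≤ M)
    (hk1 : 1 ≤ k) (hk : k ≤ N) : x k ≤ M := by
  have hk1 : (1 : ℝ) ≤ k := by exact_mod_cast hk1
  exact (le_mul_of_one_le_left (hx k) hk1).trans (natCast_mul_le_of_moment_le hx hM hk)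

theorem le_of_moment_le (hx : ∀ j, 0 ≤ x j) (hM : ∑ j ∈ Icc 1 N, (j : ℝ) * x j ≤ M)
    (hx0 : x 0 = 0) (hk : k ≤ N) : x k ≤ M := by
  rcases k.eq_zero_or_pos with rfl | hk1
  · exact hx0.trans_le (nonneg_of_moment_le hx hM)
  · exact le_of_moment_le_of_one_le hx hM hk1 hk

theorem mul_sum_Icc_one_natCast_mul_mem_Icc (hx : ∀ j, 0 ≤ x j)
    (hM : ∑ j ∈ Icc 1 N, (j : ℝ) * x j ≤ M)
    (ha : ∀ j, 0 ≤ a j) (ham : ∀ j, 1 ≤ j → a j ≤ m * j) (hm : 0 ≤ m) (hk : k ≤ N) :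
    x k * ∑ j ∈ Icc 1 k, (j : ℝ) * a j * x j ∈ Set.Icc 0 (m * M ^ 2) := by
  have hS : ∑ j ∈ Icc 1 k, (j : ℝ) * a j * x j ≤ (m * k) * M := by
    refine sum_le_mul_of_le_mul_moment hx hM (fun j hj => ?_) (by positivity) fun j hj => ?_
    · simp only [mem_Icc] at hj ⊢; omega
    · obtain ⟨hj1, hjk⟩ := mem_Icc.mp hj
      have hjx : 0 ≤ (j : ℝ) * x j := mul_nonneg j.cast_nonneg (hx j)
      calc (j : ℝ) * a j * x j = a j * (j * x j) := by ring
        _ ≤ m * j * (j * x j) := mul_le_mul_of_nonneg_right (ham j hj1) hjx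
        _ ≤ m * k * (j * x j) := by gcongr
  refine ⟨mul_nonneg (hx k) (sum_nonneg fun j _ => ?_), ?_⟩
  · exact mul_nonneg (mul_nonneg j.cast_nonneg (ha j)) (hx j)
  · calc x k * ∑ j ∈ Icc 1 k, (j : ℝ) * a j * x j ≤ x k * ((m * k) * M) :=
          mul_le_mul_of_nonneg_left hS (hx k)
      _ = m * M * (k * x k) := by ring
      _ ≤ m * M * M := by
          gcongr
          · exact mul_nonneg hm (nonneg_of_moment_le hx hM)
          · exact natCast_mul_le_of_moment_le hx hM hk
      _ = m * M ^ 2 := by ring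

theorem mul_sum_Icc_top_mul_mem_Icc (hx : ∀ j, 0 ≤ x j) (hM : ∑ j ∈ Icc 1 N, (j : ℝ) * x j ≤ M)
    (ha : ∀ j, 0 ≤ a j) (ham : ∀ j, 1 ≤ j → a j ≤ m * j) (hm : 0 ≤ m) (hk1 : 1 ≤ k)
    (hk : k ≤ N) : x k * ∑ j ∈ Icc k N, a j * x j ∈ Set.Icc 0 (m * M ^ 2) := by
  refine mul_mem_Icc_mul_sq_of_le (hx k) (le_of_moment_le_of_one_le hx hM hk1 hk)
    (sum_nonneg fun j _ => mul_nonneg (ha j) (hx j)) ?_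
  refine sum_le_mul_of_le_mul_moment hx hM (fun j hj => ?_) hm fun j hj => ?_
  · simp only [mem_Icc] at hj ⊢; omega
  · have hj1 : 1 ≤ j := hk1.trans (mem_Icc.mp hj).1
    calc a j * x j ≤ m * j * x j := mul_le_mul_of_nonneg_right (ham j hj1) (hx j)
      _ = m * (j * x j) := mul_assoc _ _ _

theorem mul_sum_Icc_top_natCast_mul_mem_Icc (hx : ∀ j, 0 ≤ x j)
    (hM : ∑ j ∈ Icc 1 N, (j : ℝ) * x j ≤ M)
    (hx0 : x 0 = 0) (ha : ∀ j, 0 ≤ a j) (ham : ∀ j, 1 ≤ j → a j ≤ m) (hm : 0 ≤ m) (hk : k ≤ N) :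
    x k * ∑ j ∈ Icc k N, (j : ℝ) * a j * x j ∈ Set.Icc 0 (m * M ^ 2) := by
  refine mul_mem_Icc_mul_sq_of_le (hx k) (le_of_moment_le hx hM hx0 hk)
    (sum_nonneg fun j _ => mul_nonneg (mul_nonneg j.cast_nonneg (ha j)) (hx j)) ?_
  refine sum_le_mul_of_le_mul_moment hx hM (fun j hj => ?_) hm fun j _ => ?_
  · simp only [mem_Icc] at hj ⊢; omega
  · rcases j.eq_zero_or_pos with rfl | hj1
    · simp
    · calc (j : ℝ) * a j * x j = a j * (j * x j) := by ring
        _ ≤ m * (j * x j) :=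
          mul_le_mul_of_nonneg_right (ham j hj1) (mul_nonneg j.cast_nonneg (hx j))

theorem mul_sum_Icc_one_mul_mem_Icc (hx : ∀ j, 0 ≤ x j) (hM : ∑ j ∈ Icc 1 N, (j : ℝ) * x j ≤ M)
    (ha : ∀ j, 0 ≤ a j) (ham : ∀ j, 1 ≤ j → a j ≤ m) (hm : 0 ≤ m) (hk1 : 1 ≤ k) (hk : k ≤ N) :
    x k * ∑ j ∈ Icc 1 k, a j * x j ∈ Set.Icc 0 (m * M ^ 2) := by
  refine mul_mem_Icc_mul_sq_of_le (hx k) (le_of_moment_le_of_one_le hx hM hk1 hk)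
    (sum_nonneg fun j _ => mul_nonneg (ha j) (hx j)) ?_
  refine sum_le_mul_of_le_mul_moment hx hM (fun j hj => ?_) hm fun j hj => ?_
  · simp only [mem_Icc] at hj ⊢; omega
  · have hj1 : (1 : ℝ) ≤ j := by exact_mod_cast (mem_Icc.mp hj).1
    calc a j * x j ≤ m * x j := mul_le_mul_of_nonneg_right (ham j (mem_Icc.mp hj).1) (hx j)
      _ ≤ m * (j * x j) := by gcongr; exact le_mul_of_one_le_left (hx j) hj1

end TruncatedCA

open TruncatedCA

theorem stmt12_general (K C : ℕ → ℕ → ℝ)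
    (hKnn : ∀ i j, 0 ≤ K i j) (hCnn : ∀ i j, 0 ≤ C i j)
    (N : ℕ) (M₁ : ℝ) (μ ξ : ℕ → ℝ)
    (hμnn : ∀ i, 0 ≤ μ i) (hξnn : ∀ i, 0 ≤ ξ i)
    (hμ : ∀ i j, 1 ≤ j → K i j ≤ μ i * j)
    (hξ : ∀ i j, 1 ≤ j → C i j ≤ ξ i)
    (c : ℝ → ℕ → ℝ) (hzero : ∀ t, c t 0 = 0)
    (hnn : ∀ t ≥ (0:ℝ), ∀ i, 0 ≤ c t i)
    (hmass : ∀ t ≥ (0:ℝ), ∑ j ∈ Finset.Icc 1 N, (j:ℝ) * c t j ≤ M₁) :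
    ∀ i ∈ Finset.Icc 1 N, ∀ t ≥ (0:ℝ),
      |Qtr K C N (c t) i| ≤ (μ (i-1) + ξ (i-1) + 2 * (μ i + ξ i)) * M₁^2 := by
  intro i hi t ht
  obtain ⟨hi1, hiN⟩ := mem_Icc.mp hi
  have hx := hnn t ht
  have hM := hmass t ht
  have hi1N : i - 1 ≤ N := by omega
  obtain ⟨hT1, hT1'⟩ := mul_sum_Icc_one_natCast_mul_mem_Icc hx hM (hKnn (i - 1))
    (hμ (i - 1)) (hμnn _) hi1N
  obtain ⟨hT2, hT2'⟩ := mul_sum_Icc_one_natCast_mul_mem_Icc hx hM (hKnn i) (hμ i) (hμnn _)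
    hiN
  obtain ⟨hT3, hT3'⟩ := mul_sum_Icc_top_mul_mem_Icc hx hM (hKnn i) (hμ i) (hμnn _) hi1 hiN
  obtain ⟨hT4, hT4'⟩ := mul_sum_Icc_top_natCast_mul_mem_Icc hx hM (hzero t) (hCnn (i - 1))
    (hξ (i - 1)) (hξnn _) hi1N
  obtain ⟨hT5, hT5'⟩ := mul_sum_Icc_top_natCast_mul_mem_Icc hx hM (hzero t) (hCnn i) (hξ i)
    (hξnn _) hiN
  obtain ⟨hT6, hT6'⟩ := mul_sum_Icc_one_mul_mem_Icc hx hM (hCnn i) (hξ i) (hξnn _) hi1 hiN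
  rw [Qtr, abs_le]
  constructor <;> linarith

theorem stmt12 (K C : ℕ → ℕ → ℝ)
    (hKnn : ∀ i j, 0 ≤ K i j) (hCnn : ∀ i j, 0 ≤ C i j)
    (hKsym : ∀ i j, K i j = K j i) (hCsym : ∀ i j, C i j = C j i)
    (N : ℕ) (hN : 3 ≤ N) (M₁ : ℝ) (μ ξ : ℕ → ℝ)
    (hμ0 : μ 0 = 0) (hξ0 : ξ 0 = 0)
    (hμnn : ∀ i, 0 ≤ μ i) (hξnn : ∀ i, 0 ≤ ξ i)
    (hμ : ∀ i j, 1 ≤ j → K i j ≤ μ i * j)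
    (hξ : ∀ i j, 1 ≤ j → C i j ≤ ξ i)
    (c : ℝ → ℕ → ℝ) (hzero : ∀ t, c t 0 = 0)
    (hnn : ∀ t ≥ (0:ℝ), ∀ i, 0 ≤ c t i)
    (hmass : ∀ t ≥ (0:ℝ), ∑ j ∈ Finset.Icc 1 N, (j:ℝ) * c t j ≤ M₁)
    (hsol : ∀ t ≥ (0:ℝ), ∀ i ∈ Finset.Icc 1 N,
      HasDerivAt (fun s => c s i) (Qtr K C N (c t) i) t) :
    ∀ i ∈ Finset.Icc 1 N, ∀ t ≥ (0:ℝ),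
      |Qtr K C N (c t) i| ≤ (μ (i-1) + ξ (i-1) + 2 * (μ i + ξ i)) * M₁^2 :=
  stmt12_general K C hKnn hCnn N M₁ μ ξ hμnn hξnn hμ hξ c hzero hnn hmass
end
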